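/- Let a : ℝ → ℝ be smooth and let g be the Lorentzian plane-wave metric on ℝ⁴ with coordinates (u, v, x¹, x²) and components g_{uu} = a(u)((x¹)² + (x²)²), g_{uv} = g_{vu} = 1, g_{x¹x¹} = g_{x²x²} = 1, all other components zero (its inverse has components g^{uv} = g^{vu} = 1, g^{vv} = −a(u)((x¹)² + (x²)²), g^{x¹x¹} = g^{x²x²} = 1, all other components zero). Let F : ℝ → ℝ be smooth with F''(u) = 2 a(u) for all u, and set f(u, v, x¹, x²) = F(u). Then (g, f) is a steady gradient Ricci soliton: Hes_f(∂_α, ∂_β) + ρ_{αβ} = 0 on ℝ⁴ for all coordinate indices α, β, where 𝚪^δ_{αβ} = ½ Σ_γ g^{δγ}(∂_α g_{γβ} + ∂_β g_{γα} − ∂_γ g_{αβ}) are the Levi-Civita Christoffel symbols, Hes_f(∂_α,∂_β) = ∂_α∂_β f − Σ_δ 𝚪^δ_{αβ} ∂_δ f, and ρ_{αβ} = Σ_γ ∂_γ 𝚪^γ_{αβ} − ∂_α(Σ_γ 𝚪^γ_{γβ}) + Σ_{γ,δ}(𝚪^γ_{γδ}𝚪^δ_{αβ} − 𝚪^γ_{αδ}𝚪^δ_{γβ})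 is the Ricci tensor of g. -/

import Mathlib

noncomputable section

/-- Points of `ℝ⁴` with coordinates `(u, v, x¹, x²)` indexed by `0, 1, 2, 3`. -/
abbrev Pt4 := Fin 4 → ℝ

/-- Partial derivative `∂_α`. -/
def pd4 (a : Fin 4) (f : Pt4 → ℝ) (p : Pt4) : ℝ :=
  fderiv ℝ f p (Pi.single a 1)

/-- The plane-wave metric `g = 2 du dv + a(u)((x¹)² + (x²)²) du² + (dx¹)² + (dx²)²`:
`g_{uu} = a(u)((x¹)²+(x²)²)`, `g_{uv} = g_{vu} = 1`, `g_{x¹x¹} = g_{x²x²} = 1`,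
all other components zero. -/
def gPW (a : ℝ → ℝ) (α β : Fin 4) (p : Pt4) : ℝ :=
  if α = 0 ∧ β = 0 then a (p 0) * ((p 2) ^ 2 + (p 3) ^ 2)
  else if (α = 0 ∧ β = 1) ∨ (α = 1 ∧ β = 0) then 1
  else if (α = 2 ∧ β = 2) ∨ (α = 3 ∧ β = 3) then 1
  else 0

/-- The inverse metric: `g^{uv} = g^{vu} = 1`, `g^{vv} = −a(u)((x¹)²+(x²)²)`,
`g^{x¹x¹} = g^{x²x²} = 1`, all other components zero. -/
def gPWinv (a : ℝ → ℝ) (α β : Fin 4) (p : Pt4) : ℝ :=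
  if (α = 0 ∧ β = 1) ∨ (α = 1 ∧ β = 0) then 1
  else if α = 1 ∧ β = 1 then -(a (p 0) * ((p 2) ^ 2 + (p 3) ^ 2))
  else if (α = 2 ∧ β = 2) ∨ (α = 3 ∧ β = 3) then 1
  else 0

/-- The Levi-Civita Christoffel symbols
`𝚪^δ_{αβ} = ½ Σ_γ g^{δγ}(∂_α g_{γβ} + ∂_β g_{γα} − ∂_γ g_{αβ})`. -/
def ΓPW (a : ℝ → ℝ) (δ α β : Fin 4) (p : Pt4) : ℝ :=
  (1 / 2) * ∑ γ : Fin 4, gPWinv a δ γ p *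
    (pd4 α (gPW a γ β) p + pd4 β (gPW a γ α) p - pd4 γ (gPW a α β) p)

/-- The Ricci tensor
`ρ_{αβ} = Σ_γ ∂_γ 𝚪^γ_{αβ} − ∂_α(Σ_γ 𝚪^γ_{γβ}) + Σ_{γ,δ}(𝚪^γ_{γδ}𝚪^δ_{αβ} − 𝚪^γ_{αδ}𝚪^δ_{γβ})`. -/
def ricciPW (a : ℝ → ℝ) (α β : Fin 4) (p : Pt4) : ℝ :=
  (∑ γ : Fin 4, pd4 γ (ΓPW a γ α β) p) - pd4 α (fun q => ∑ γ : Fin 4, ΓPW a γ γ β q) p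
    + ∑ γ : Fin 4, ∑ δ : Fin 4,
        (ΓPW a γ γ δ p * ΓPW a δ α β p - ΓPW a γ α δ p * ΓPW a δ γ β p)

/-- The Hessian `Hes_f(∂_α,∂_β) = ∂_α∂_β f − Σ_δ 𝚪^δ_{αβ} ∂_δ f`. -/
def hessPW (a : ℝ → ℝ) (f : Pt4 → ℝ) (α β : Fin 4) (p : Pt4) : ℝ :=
  pd4 α (pd4 β f) p - ∑ δ : Fin 4, ΓPW a δ α β p * pd4 δ f p

def projL (i : Fin 4) : Pt4 →L[ℝ] ℝ := ContinuousLinearMap.proj i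

lemma hasF_proj (i : Fin 4) (p : Pt4) : HasFDerivAt (fun q : Pt4 => q i) (projL i) p :=
  (projL i).hasFDerivAt

lemma pd4_of (α : Fin 4) {f : Pt4 → ℝ} {L : Pt4 →L[ℝ] ℝ} {p : Pt4} (h : HasFDerivAt f L p) :
    pd4 α f p = L (Pi.single α 1) := by
  rw [pd4, h.fderiv]

lemma pd4_const (α : Fin 4) (c : ℝ) (p : Pt4) : pd4 α (fun _ => c) p = 0 := by
  simp [pd4]

lemma pd4_B1 (b : ℝ → ℝ) (p : Pt4) (hb : DifferentiableAt ℝ b (p 0)) (α : Fin 4) :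
    pd4 α (fun q => b (q 0)) p = if α = 0 then deriv b (p 0) else 0 := by
  have h : HasFDerivAt (fun q : Pt4 => b (q 0)) (deriv b (p 0) • projL 0) p :=
    (hb.hasDerivAt).comp_hasFDerivAt p (hasF_proj 0 p)
  rw [pd4_of α h]
  rcases eq_or_ne α 0 with rfl | h0
  · simp [projL, Pi.single_apply]
  · simp [projL, Pi.single_apply, h0, Ne.symm h0]

lemma pd4_B2 (b : ℝ → ℝ) (p : Pt4) (hb : DifferentiableAt ℝ b (p 0)) (j : Fin 4) (α : Fin 4) :
    pd4 α (fun q => b (q 0) * q j) p =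
      (if α = 0 then deriv b (p 0) * p j else 0) + (if α = j then b (p 0) else 0) := by
  have h1 : HasFDerivAt (fun q : Pt4 => b (q 0)) (deriv b (p 0) • projL 0) p :=
    (hb.hasDerivAt).comp_hasFDerivAt p (hasF_proj 0 p)
  have h := h1.mul (hasF_proj j p)
  rw [pd4_of α (f := fun q => b (q 0) * q j) h]
  simp only [ContinuousLinearMap.add_apply, ContinuousLinearMap.smul_apply, projL,
    ContinuousLinearMap.proj_apply, Pi.single_apply]
  fin_cases α <;> fin_cases j <;> simp <;> try ring

lemma pd4_B3 (b : ℝ → ℝ) (p : Pt4) (hb : DifferentiableAt ℝ b (p 0)) (α : Fin 4) :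
    pd4 α (fun q => b (q 0) * ((q 2) ^ 2 + (q 3) ^ 2)) p =
      if α = 0 then deriv b (p 0) * ((p 2) ^ 2 + (p 3) ^ 2)
      else if α = 2 then b (p 0) * (2 * p 2)
      else if α = 3 then b (p 0) * (2 * p 3) else 0 := by
  have h1 : HasFDerivAt (fun q : Pt4 => b (q 0)) (deriv b (p 0) • projL 0) p :=
    (hb.hasDerivAt).comp_hasFDerivAt p (hasF_proj 0 p)
  have h := h1.mul (((hasF_proj 2 p).mul (hasF_proj 2 p)).add ((hasF_proj 3 p).mul (hasF_proj 3 p)))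
  simp only [pow_two]
  rw [pd4_of α (f := fun q => b (q 0) * (q 2 * q 2 + q 3 * q 3)) h]
  simp only [ContinuousLinearMap.add_apply, ContinuousLinearMap.smul_apply, projL,
    ContinuousLinearMap.proj_apply, Pi.single_apply]
  fin_cases α <;> simp [two_mul, mul_comm]

lemma diff_B3 (b : ℝ → ℝ) (p : Pt4) (hb : DifferentiableAt ℝ b (p 0)) :
    DifferentiableAt ℝ (fun q : Pt4 => b (q 0) * ((q 2) ^ 2 + (q 3) ^ 2)) p := by
  have h1 : DifferentiableAt ℝ (fun q : Pt4 => b (q 0)) p :=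
    ((hb.hasDerivAt).comp_hasFDerivAt p (hasF_proj 0 p)).differentiableAt
  exact h1.mul ((((hasF_proj 2 p).differentiableAt).pow 2).add
    (((hasF_proj 3 p).differentiableAt).pow 2))

lemma pd4_cmul (c : ℝ) {f : Pt4 → ℝ} {p : Pt4} (hf : DifferentiableAt ℝ f p) (α : Fin 4) :
    pd4 α (fun q => c * f q) p = c * pd4 α f p := by
  rw [pd4, pd4, fderiv_const_mul hf]; simp

lemma pd4_neg (f : Pt4 → ℝ) (α : Fin 4) (p : Pt4) :
    pd4 α (fun q => -f q) p = -pd4 α f p := by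
  simp [pd4, fderiv_neg]

/-- The Christoffel symbols, in closed form. -/
def Γtab (a : ℝ → ℝ) (δ α β : Fin 4) (p : Pt4) : ℝ :=
  if δ = 1 ∧ α = 0 ∧ β = 0 then 2⁻¹ * (deriv a (p 0) * ((p 2) ^ 2 + (p 3) ^ 2))
  else if δ = 1 ∧ ((α = 0 ∧ β = 2) ∨ (α = 2 ∧ β = 0)) then a (p 0) * p 2
  else if δ = 1 ∧ ((α = 0 ∧ β = 3) ∨ (α = 3 ∧ β = 0)) then a (p 0) * p 3
  else if δ = 2 ∧ α = 0 ∧ β = 0 then -(a (p 0) * p 2)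
  else if δ = 3 ∧ α = 0 ∧ β = 0 then -(a (p 0) * p 3)
  else 0

lemma pd4_g (a : ℝ → ℝ) (p : Pt4) (ha : DifferentiableAt ℝ a (p 0)) (α γ β : Fin 4) :
    pd4 α (gPW a γ β) p =
      if γ = 0 ∧ β = 0 then
        (if α = 0 then deriv a (p 0) * ((p 2) ^ 2 + (p 3) ^ 2)
         else if α = 2 then a (p 0) * (2 * p 2)
         else if α = 3 then a (p 0) * (2 * p 3) else 0)
      else 0 := by
  by_cases h : γ = 0 ∧ β = 0
  · have hg : gPW a γ β = fun q => a (q 0) * ((q 2) ^ 2 + (q 3) ^ 2) := by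
      funext q; simp [gPW, h]
    rw [hg, if_pos h, pd4_B3 a p ha α]
  · have hg : gPW a γ β = fun _ =>
        (if (γ = 0 ∧ β = 1) ∨ (γ = 1 ∧ β = 0) then (1:ℝ)
         else if (γ = 2 ∧ β = 2) ∨ (γ = 3 ∧ β = 3) then 1 else 0) := by
      funext q; simp [gPW, h]
    rw [hg, if_neg h, pd4_const]

lemma ΓPW_eq (a : ℝ → ℝ) (ha : Differentiable ℝ a) (δ α β : Fin 4) (p : Pt4) :
    ΓPW a δ α β p = Γtab a δ α β p := by
  unfold ΓPW
  rw [Fin.sum_univ_four]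
  simp only [pd4_g a p (ha (p 0))]
  fin_cases δ <;> fin_cases α <;> fin_cases β <;> simp [gPWinv, Γtab] <;> ring

lemma Γtab_funext (a : ℝ → ℝ) (δ α β : Fin 4) : Γtab a δ α β =
    if δ = 1 ∧ α = 0 ∧ β = 0 then
      (fun q : Pt4 => 2⁻¹ * (deriv a (q 0) * ((q 2) ^ 2 + (q 3) ^ 2)))
    else if δ = 1 ∧ ((α = 0 ∧ β = 2) ∨ (α = 2 ∧ β = 0)) then (fun q => a (q 0) * q 2)
    else if δ = 1 ∧ ((α = 0 ∧ β = 3) ∨ (α = 3 ∧ β = 0)) then (fun q => a (q 0) * q 3)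
    else if δ = 2 ∧ α = 0 ∧ β = 0 then (fun q => -(a (q 0) * q 2))
    else if δ = 3 ∧ α = 0 ∧ β = 0 then (fun q => -(a (q 0) * q 3))
    else (fun _ => 0) := by
  funext q
  simp only [Γtab]
  split_ifs <;> rfl

lemma Γtab_diag (a : ℝ → ℝ) (γ β : Fin 4) (p : Pt4) : Γtab a γ γ β p = 0 := by
  fin_cases γ <;> simp [Γtab]

lemma pd4_half (a : ℝ → ℝ) (p : Pt4) (hd : DifferentiableAt ℝ (deriv a) (p 0)) (μ : Fin 4) :
    pd4 μ (fun q => 2⁻¹ * (deriv a (q 0) * ((q 2) ^ 2 + (q 3) ^ 2))) p =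
      2⁻¹ * (if μ = 0 then deriv (deriv a) (p 0) * ((p 2) ^ 2 + (p 3) ^ 2)
        else if μ = 2 then deriv a (p 0) * (2 * p 2)
        else if μ = 3 then deriv a (p 0) * (2 * p 3) else 0) := by
  rw [pd4_cmul _ (diff_B3 (deriv a) p hd), pd4_B3 (deriv a) p hd]

lemma pd4_negB2 (b : ℝ → ℝ) (p : Pt4) (hb : DifferentiableAt ℝ b (p 0)) (j μ : Fin 4) :
    pd4 μ (fun q => -(b (q 0) * q j)) p =
      -((if μ = 0 then deriv b (p 0) * p j else 0) + (if μ = j then b (p 0) else 0)) := by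
  rw [pd4_neg, pd4_B2 b p hb j μ]

lemma ricci_eq (a : ℝ → ℝ) (ha : ContDiff ℝ (⊤ : ℕ∞) a) (α β : Fin 4) (p : Pt4) :
    ricciPW a α β p = if α = 0 ∧ β = 0 then -(2 * a (p 0)) else 0 := by
  have hda : Differentiable ℝ a := ha.differentiable (by simp)
  have hda' : Differentiable ℝ (deriv a) := by
    have h1 : ContDiff ℝ (((⊤ : ℕ∞) : WithTop ℕ∞)) a := ha.of_le (by simp)
    exact ((contDiff_infty_iff_deriv.mp h1).2).differentiable (by simp)
  have hΓ : ∀ δ α β : Fin 4, ΓPW a δ α β = Γtab a δ α β := fun δ α β =>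
    funext fun q => ΓPW_eq a hda δ α β q
  have hsum : (fun q => ∑ γ : Fin 4, ΓPW a γ γ β q) = fun _ => (0:ℝ) := by
    funext q; rw [Fin.sum_univ_four]
    simp [ΓPW_eq a hda, Γtab_diag]
  unfold ricciPW
  rw [hsum, pd4_const]
  simp only [hΓ, Fin.sum_univ_four]
  fin_cases α <;> fin_cases β <;>
    simp [Γtab_funext, Γtab, pd4_const, pd4_B2 a p (hda (p 0)),
      pd4_negB2 a p (hda (p 0)), pd4_half a p (hda' (p 0))] <;> ring

lemma hess_eq (a F : ℝ → ℝ) (ha : ContDiff ℝ (⊤ : ℕ∞) a) (hF : ContDiff ℝ (⊤ : ℕ∞) F)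
    (hF'' : ∀ u : ℝ, deriv (deriv F) u = 2 * a u) (α β : Fin 4) (p : Pt4) :
    hessPW a (fun q => F (q 0)) α β p = if α = 0 ∧ β = 0 then 2 * a (p 0) else 0 := by
  have hda : Differentiable ℝ a := ha.differentiable (by simp)
  have hdF : Differentiable ℝ F := hF.differentiable (by simp)
  have hdF' : Differentiable ℝ (deriv F) := by
    have h1 : ContDiff ℝ (((⊤ : ℕ∞) : WithTop ℕ∞)) F := hF.of_le (by simp)
    exact ((contDiff_infty_iff_deriv.mp h1).2).differentiable (by simp)
  have h1 : ∀ β : Fin 4, pd4 β (fun q : Pt4 => F (q 0)) =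
      fun p => if β = 0 then deriv F (p 0) else 0 :=
    fun β => funext fun p => pd4_B1 F p (hdF (p 0)) β
  unfold hessPW
  fin_cases α <;> fin_cases β <;>
    simp [Fin.sum_univ_four, h1, ΓPW_eq a hda, Γtab, pd4_const,
      pd4_B1 (deriv F) p (hdF' (p 0)), hF'']

/-- For any smooth `a : ℝ → ℝ` and smooth `F : ℝ → ℝ` with
`F'' = 2a`, the plane-wave metric `gPW a` together with the potential function
`f(u,v,x¹,x²) = F(u)` is a steady gradient Ricci soliton:
`Hes_f(∂_α,∂_β) + ρ_{αβ} = 0` on all of `ℝ⁴`. -/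
theorem stmt19 (a : ℝ → ℝ) (ha : ContDiff ℝ (⊤ : ℕ∞) a)
    (F : ℝ → ℝ) (hF : ContDiff ℝ (⊤ : ℕ∞) F) (hF'' : ∀ u : ℝ, deriv (deriv F) u = 2 * a u)
    (f : Pt4 → ℝ) (hf : f = fun p => F (p 0)) :
    ∀ p : Pt4, ∀ α β : Fin 4, hessPW a f α β p + ricciPW a α β p = 0 := by
  intro p α β
  rw [hf, hess_eq a F ha hF hF'' α β p, ricci_eq a ha α β p]
  by_cases h : α = 0 ∧ β = 0 <;> simp [h]


end
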